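/- arXiv:2207.04759 — 6 statements merged into one kernel-verified Lean document; each statement's English description precedes it below -/
import Mathlib

section
/- Let F = ⟨a⟩, H = ⟨h⟩ with h = a^m for even m ≥ 2, and g = a^k with k coprime to m. Then every non-trivial equation in I_g = ker φ_g ⊆ H * ⟨x⟩ has even degree, and for every s ≥ 1 the commutator [h, x^s] is a non-trivial element of I_g of degree 2s; hence D_g = 2ℕ \ {0}. -/
/-!
Reducing the exponent sum `F → ℤ` modulo `m` kills `H ≤ ⟨a^m⟩` and sends `x` to the unit `k`,
so the total `x`-exponent of an equation is divisible by `m`, hence even; it has the parity of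
the number of `x`-letters of any conjugate, in particular of the degree.

For `[h, x^s]` the upper bound `2s` is the word itself. For the lower bound, the number of
`x`-letters in the reduced word of an element of the free product is subadditive, and
`[h, x^s]^n` is the reduced word `(h x^s h⁻¹ x^{-s})^n`, with `2sn` such letters. A subadditive
length growing at rate `2s` along the powers of `w` is at least `2s` on every conjugate of `w`,
in particular on the conjugate realising the degree.
-/

open Monoid
open scoped Monoid.Coprod
open scoped commutatorElement

/-- The generator `x` of the infinite cyclic group `⟨x⟩ = Multiplicative ℤ`. -/
def xgen : Multiplicative ℤ := Multiplicative.ofAdd 1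

/-- An alternating expression `h₀ · x^{β₁} c₁ · x^{β₂} c₂ ⋯ x^{β_m} c_m` in `H ∗ ⟨x⟩`,
recorded by the head coefficient `h₀` and the list `l = [(β₁,c₁),…,(β_m,c_m)]`. -/
def coprodExpr {H : Type*} [Group H] (h₀ : H) (l : List (ℤ × H)) : H ∗ Multiplicative ℤ :=
  Coprod.inl h₀ * (l.map fun p => Coprod.inr (xgen ^ p.1) * Coprod.inl p.2).prod

/-- The degree of an equation `w ∈ H ∗ ⟨x⟩`: the number of occurrences of `x` and `x⁻¹`
in the cyclic reduction of `w`.  Equivalently (and this is how we formalize it), it is the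
minimum, over all elements conjugate to `w` and over all ways of writing such a conjugate as
an alternating expression `h₀ x^{β₁} c₁ ⋯ x^{β_m} c_m`, of the total number `∑ᵢ |βᵢ|` of
occurrences of `x^{±1}`; this minimum is achieved exactly by the cyclic reduction of `w`. -/
noncomputable def degree {H : Type*} [Group H] (w : H ∗ Multiplicative ℤ) : ℕ :=
  sInf { n | ∃ (c : H ∗ Multiplicative ℤ) (h₀ : H) (l : List (ℤ × H)),
      c * w * c⁻¹ = coprodExpr h₀ l ∧ (l.map fun p => p.1.natAbs).sum = n }


namespace Monoid.CoprodI

open Word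

variable {ι : Type*} {M : ι → Type*} [∀ i, Monoid (M i)] (ν : ∀ i, M i → ℕ)

namespace Word

def weight (w : Word M) : ℕ := (w.toList.map fun l => ν l.1 l.2).sum

variable [∀ i, DecidableEq (M i)]

theorem weight_rcons_le {i : ι} (p : Pair M i) :
    (rcons p).weight ν ≤ ν i p.head + p.tail.weight ν := by
  unfold rcons
  split
  · exact Nat.le_add_left _ _
  · simp [weight]

theorem weight_rcons {i : ι} (p : Pair M i) (hp : p.head ≠ 1) :
    (rcons p).weight ν = ν i p.head + p.tail.weight ν := by
  simp [rcons, hp, weight]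

variable [DecidableEq ι]

theorem weight_of_smul_le (hν : ∀ i (x y : M i), ν i (x * y) ≤ ν i x + ν i y) {i : ι}
    (m : M i) (w : Word M) : (of m • w).weight ν ≤ ν i m + w.weight ν := by
  rw [of_smul_def]
  refine (weight_rcons_le ν _).trans ?_
  obtain ⟨p, rfl⟩ := (equivPair i).symm.surjective w
  rw [Equiv.apply_symm_apply, equivPair_symm]
  by_cases hp : p.head = 1
  · rw [hp, mul_one, rcons, dif_pos hp]
  · rw [weight_rcons ν p hp, ← add_assoc]
    exact Nat.add_le_add_right (hν _ _ _) _

theorem weight_prod_smul_le (hν : ∀ i (x y : M i), ν i (x * y) ≤ ν i x + ν i y)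
    (u w : Word M) : (u.prod • w).weight ν ≤ u.weight ν + w.weight ν := by
  induction u using consRecOn with
  | empty => simp [weight, prod_empty]
  | cons i m u _ _ ih =>
    rw [prod_cons, mul_smul]
    refine (weight_of_smul_le ν hν m _).trans ?_
    simp only [weight, cons_toList, List.map_cons, List.sum_cons] at ih ⊢
    omega

end Word

variable [DecidableEq ι] [∀ i, DecidableEq (M i)]

def weightedLength (g : CoprodI M) : ℕ := (Word.equiv g).weight ν

theorem weightedLength_prod (w : Word M) : weightedLength ν w.prod = w.weight ν :=
  congrArg (Word.weight ν) (Word.equiv.apply_symm_apply w)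

theorem weightedLength_mul_le (hν : ∀ i (x y : M i), ν i (x * y) ≤ ν i x + ν i y)
    (g h : CoprodI M) : weightedLength ν (g * h) ≤ weightedLength ν g + weightedLength ν h := by
  have hg : (Word.equiv g).prod = g := Word.equiv.symm_apply_apply g
  have : Word.equiv (g * h) = (Word.equiv g).prod • Word.equiv h := by
    rw [hg]; exact mul_smul g h (Word.empty : Word M)
  rw [weightedLength, this]
  exact Word.weight_prod_smul_le ν hν _ _

theorem weightedLength_of_le (hν : ∀ i (x y : M i), ν i (x * y) ≤ ν i x + ν i y) {i : ι}
    (m : M i) : weightedLength ν (of m) ≤ ν i m :=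
  Word.weight_of_smul_le ν hν m Word.empty

theorem weightedLength_prod_pow (w : Word M)
    (hw : ∀ x ∈ w.toList.getLast?, ∀ y ∈ w.toList.head?, x.1 ≠ y.1) (n : ℕ) :
    weightedLength ν (w.prod ^ n) = n * w.weight ν := by
  let L := (List.replicate n w.toList).flatten
  have ne_one : ∀ l ∈ L, l.2 ≠ 1 := by
    intro l hl
    obtain ⟨_, hl', hl⟩ := List.mem_flatten.1 hl
    rw [List.eq_of_mem_replicate hl'] at hl
    exact w.ne_one l hl
  have chain : L.IsChain fun l l' => l.1 ≠ l'.1 := by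
    rcases eq_or_ne w.toList [] with hnil | hnil
    · simp [L, hnil]
    · refine (List.isChain_flatten fun h => hnil (List.eq_of_mem_replicate h).symm).2
        ⟨fun l hl => (List.eq_of_mem_replicate hl) ▸ w.chain_ne, ?_⟩
      exact List.isChain_replicate_of_rel n hw
  have hprod : (⟨L, ne_one, chain⟩ : Word M).prod = w.prod ^ n := by
    simp [L, Word.prod, List.map_flatten, List.prod_flatten, List.map_replicate]
  rw [← hprod, weightedLength_prod]
  simp [L, Word.weight, List.map_flatten, List.sum_flatten, List.map_replicate]

end Monoid.CoprodI

theorem le_apply_conj_of_forall_mul_le_apply_pow {G : Type*} [Group G] {ℓ : G → ℕ}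
    (hℓ : ∀ a b, ℓ (a * b) ≤ ℓ a + ℓ b) {w : G} {d : ℕ} (hw : ∀ n : ℕ, n * d ≤ ℓ (w ^ n))
    (c : G) : d ≤ ℓ (c * w * c⁻¹) := by
  have pow_le : ∀ (a : G) (n : ℕ), ℓ (a ^ (n + 1)) ≤ (n + 1) * ℓ a := by
    intro a n
    induction n with
    | zero => simp
    | succ n ih =>
      rw [pow_succ]
      exact (hℓ _ _).trans (by linarith)
  set C := ℓ c⁻¹ + ℓ c
  have key : (C + 1) * d ≤ C + (C + 1) * ℓ (c * w * c⁻¹) :=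
    calc (C + 1) * d ≤ ℓ (w ^ (C + 1)) := hw _
      _ = ℓ (c⁻¹ * (c * w * c⁻¹) ^ (C + 1) * c) := by rw [conj_pow]; group
      _ ≤ ℓ c⁻¹ + ℓ ((c * w * c⁻¹) ^ (C + 1)) + ℓ c :=
        (hℓ _ _).trans (Nat.add_le_add_right (hℓ _ _) _)
      _ ≤ C + (C + 1) * ℓ (c * w * c⁻¹) := by have := pow_le (c * w * c⁻¹) C; omega
  by_contra! h
  nlinarith

theorem even_sum_map_natAbs_iff (l : List ℤ) : Even (l.map Int.natAbs).sum ↔ Even l.sum := by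
  induction l with
  | nil => simp
  | cons b l ih =>
    rw [List.map_cons, List.sum_cons, List.sum_cons, Nat.even_add, Int.even_add, ih,
      Int.natAbs_even]

section Degree

open Monoid.CoprodI

variable {K : Type}

-- Reduced words are available for `Monoid.CoprodI`, so `K ∗ ⟨x⟩` is mapped into it.
abbrev xFactor (K : Type) : Bool → Type := fun b => cond b (Multiplicative ℤ) K

def xWeight : ∀ b, xFactor K b → ℕ
  | true, t => (Multiplicative.toAdd t).natAbs
  | false, _ => 0

@[simp]
theorem xWeight_false (x : K) : xWeight false x = 0 := rfl

@[simp]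
theorem xWeight_true (t : Multiplicative ℤ) :
    xWeight (K := K) true t = (Multiplicative.toAdd t).natAbs :=
  rfl

variable [Group K]

instance : ∀ b, Group (xFactor K b)
  | true => inferInstanceAs (Group (Multiplicative ℤ))
  | false => inferInstanceAs (Group K)

noncomputable instance : ∀ b, DecidableEq (xFactor K b)
  | true => inferInstanceAs (DecidableEq (Multiplicative ℤ))
  | false => Classical.decEq K

theorem xWeight_mul_le :
    ∀ b (x y : xFactor K b), xWeight b (x * y) ≤ xWeight b x + xWeight b y
  | true, x, y => Int.natAbs_add_le x y
  | false, _, _ => le_rfl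

def toCoprodI : K ∗ Multiplicative ℤ →* CoprodI (xFactor K) :=
  Coprod.lift (of (M := xFactor K) (i := false)) (of (M := xFactor K) (i := true))

@[simp]
theorem toCoprodI_inl (x : K) :
    toCoprodI (Coprod.inl x) = of (M := xFactor K) (i := false) x :=
  Coprod.lift_apply_inl _ _ x

@[simp]
theorem toCoprodI_inr (t : Multiplicative ℤ) :
    toCoprodI (K := K) (Coprod.inr t) = of (M := xFactor K) (i := true) t :=
  Coprod.lift_apply_inr _ _ t

noncomputable def xLength (w : K ∗ Multiplicative ℤ) : ℕ :=
  weightedLength xWeight (toCoprodI w)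

theorem xLength_mul_le (v w : K ∗ Multiplicative ℤ) :
    xLength (v * w) ≤ xLength v + xLength w := by
  rw [xLength, map_mul]
  exact weightedLength_mul_le _ xWeight_mul_le _ _

theorem xLength_inl (x : K) : xLength (Coprod.inl x : K ∗ Multiplicative ℤ) = 0 := by
  rw [xLength, toCoprodI_inl]
  exact Nat.le_zero.1 (weightedLength_of_le (xWeight (K := K)) xWeight_mul_le (i := false) x)

theorem xLength_inr_le (t : Multiplicative ℤ) :
    xLength (Coprod.inr t : K ∗ Multiplicative ℤ) ≤ (Multiplicative.toAdd t).natAbs := by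
  rw [xLength, toCoprodI_inr]
  exact weightedLength_of_le (xWeight (K := K)) xWeight_mul_le (i := true) t

theorem toAdd_xgen_zpow (n : ℤ) : Multiplicative.toAdd (xgen ^ n) = n := by
  simp [xgen]

theorem xgen_zpow_toAdd (t : Multiplicative ℤ) : xgen ^ Multiplicative.toAdd t = t :=
  Multiplicative.toAdd.injective (toAdd_xgen_zpow _)

theorem coprodExpr_nil (h₀ : K) : coprodExpr h₀ [] = Coprod.inl h₀ := by
  simp [coprodExpr]

theorem coprodExpr_cons (h₀ : K) (p : ℤ × K) (l : List (ℤ × K)) :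
    coprodExpr h₀ (p :: l) = Coprod.inl h₀ * Coprod.inr (xgen ^ p.1) * coprodExpr p.2 l := by
  simp [coprodExpr, mul_assoc]

theorem exists_eq_coprodExpr (w : K ∗ Multiplicative ℤ) : ∃ h₀ l, w = coprodExpr h₀ l := by
  induction w using Coprod.induction_on' with
  | one => exact ⟨1, [], by simp [coprodExpr_nil]⟩
  | inl_mul x w ih =>
    obtain ⟨h₀, l, rfl⟩ := ih
    exact ⟨x * h₀, l, by simp [coprodExpr, mul_assoc]⟩
  | inr_mul t w ih =>
    obtain ⟨h₀, l, rfl⟩ := ih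
    exact ⟨1, (Multiplicative.toAdd t, h₀) :: l, by simp [coprodExpr_cons, xgen_zpow_toAdd]⟩

theorem xLength_coprodExpr_le (h₀ : K) (l : List (ℤ × K)) :
    xLength (coprodExpr h₀ l) ≤ (l.map fun p => p.1.natAbs).sum := by
  induction l generalizing h₀ with
  | nil => simp [coprodExpr_nil, xLength_inl]
  | cons p l ih =>
    rw [coprodExpr_cons, List.map_cons, List.sum_cons]
    calc xLength (Coprod.inl h₀ * Coprod.inr (xgen ^ p.1) * coprodExpr p.2 l)
        ≤ xLength (Coprod.inl h₀ : K ∗ Multiplicative ℤ) +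
          xLength (Coprod.inr (xgen ^ p.1) : K ∗ Multiplicative ℤ) + xLength (coprodExpr p.2 l) :=
          (xLength_mul_le _ _).trans (Nat.add_le_add_right (xLength_mul_le _ _) _)
      _ ≤ 0 + p.1.natAbs + (l.map fun p => p.1.natAbs).sum := by
        gcongr
        · exact (xLength_inl h₀).le
        · have := xLength_inr_le (K := K) (xgen ^ p.1)
          rwa [toAdd_xgen_zpow] at this
        · exact ih p.2
      _ = _ := by rw [zero_add]

theorem degree_le_of_conj_eq {w c : K ∗ Multiplicative ℤ} {h₀ : K} {l : List (ℤ × K)}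
    (h : c * w * c⁻¹ = coprodExpr h₀ l) : degree w ≤ (l.map fun p => p.1.natAbs).sum :=
  Nat.sInf_le ⟨c, h₀, l, h, rfl⟩

theorem exists_conj_eq_coprodExpr_degree (w : K ∗ Multiplicative ℤ) :
    ∃ (c : K ∗ Multiplicative ℤ) (h₀ : K) (l : List (ℤ × K)),
      c * w * c⁻¹ = coprodExpr h₀ l ∧ (l.map fun p => p.1.natAbs).sum = degree w := by
  obtain ⟨h₀, l, hw⟩ := exists_eq_coprodExpr w
  exact Nat.sInf_mem (s := {n | ∃ (c : K ∗ Multiplicative ℤ) (h₀ : K) (l : List (ℤ × K)),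
    c * w * c⁻¹ = coprodExpr h₀ l ∧ (l.map fun p => p.1.natAbs).sum = n})
    ⟨_, 1, h₀, l, by simpa using hw, rfl⟩

theorem degree_one : degree (1 : K ∗ Multiplicative ℤ) = 0 :=
  Nat.le_zero.1 <| degree_le_of_conj_eq (w := (1 : K ∗ Multiplicative ℤ)) (c := 1) (h₀ := 1)
    (l := []) (by simp [coprodExpr_nil])

theorem le_degree_of_forall_mul_le_xLength_pow {w : K ∗ Multiplicative ℤ} {d : ℕ}
    (hw : ∀ n : ℕ, n * d ≤ xLength (w ^ n)) : d ≤ degree w := by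
  obtain ⟨c, h₀, l, hc, hl⟩ := exists_conj_eq_coprodExpr_degree w
  calc d ≤ xLength (c * w * c⁻¹) :=
        le_apply_conj_of_forall_mul_le_apply_pow xLength_mul_le hw c
    _ ≤ degree w := hc ▸ hl ▸ xLength_coprodExpr_le h₀ l

theorem degree_commutator {c : K} (hc : c ≠ 1) {t : Multiplicative ℤ} (ht : t ≠ 1) :
    degree ⁅(Coprod.inl c : K ∗ Multiplicative ℤ), (Coprod.inr t : K ∗ Multiplicative ℤ)⁆ =
      2 * (Multiplicative.toAdd t).natAbs := by
  refine le_antisymm ?_ (le_degree_of_forall_mul_le_xLength_pow fun n => ?_)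
  · have h : 1 * ⁅(Coprod.inl c : K ∗ Multiplicative ℤ), Coprod.inr t⁆ * 1⁻¹ =
        coprodExpr c [(Multiplicative.toAdd t, c⁻¹), (-Multiplicative.toAdd t, 1)] := by
      simp [commutatorElement_def, coprodExpr_cons, coprodExpr_nil, xgen_zpow_toAdd, mul_assoc]
    simpa [two_mul] using degree_le_of_conj_eq h
  · let W : Word (xFactor K) :=
      ⟨[⟨false, c⟩, ⟨true, t⟩, ⟨false, c⁻¹⟩, ⟨true, (t⁻¹ : Multiplicative ℤ)⟩], by
        simp only [List.mem_cons, List.not_mem_nil, or_false]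
        rintro l (rfl | rfl | rfl | rfl)
        exacts [hc, ht, inv_ne_one.2 hc, inv_ne_one.2 ht], by simp [List.isChain_cons_cons]⟩
    have hW : W.prod = toCoprodI ⁅(Coprod.inl c : K ∗ Multiplicative ℤ), Coprod.inr t⁆ := by
      simp [W, Word.prod, commutatorElement_def, mul_assoc]
    rw [xLength, map_pow, ← hW, weightedLength_prod_pow _ W (by simp [W]) n]
    simp only [W, Word.weight, List.map_cons, List.map_nil, List.sum_cons, List.sum_nil,
      xWeight_true, xWeight_false, toAdd_inv, Int.natAbs_neg]
    exact le_of_eq (by ring)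

theorem toAdd_snd_coprodExpr (h₀ : K) (l : List (ℤ × K)) :
    Multiplicative.toAdd (Coprod.snd (coprodExpr h₀ l)) = (l.map Prod.fst).sum := by
  induction l generalizing h₀ with
  | nil => simp [coprodExpr_nil]
  | cons p l ih => simp [coprodExpr_cons, ih, xgen]

theorem even_degree_iff (w : K ∗ Multiplicative ℤ) :
    Even (degree w) ↔ Even (Multiplicative.toAdd (Coprod.snd w)) := by
  obtain ⟨c, h₀, l, hc, hl⟩ := exists_conj_eq_coprodExpr_degree w
  have hsnd : Coprod.snd w = Coprod.snd (coprodExpr h₀ l) := by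
    rw [← hc, map_mul, map_mul, map_inv, mul_inv_cancel_comm]
  rw [← hl, hsnd, toAdd_snd_coprodExpr, ← even_sum_map_natAbs_iff, List.map_map]
  rfl

theorem coprodExpr_of_forall_fst_eq_zero (h₀ : K) (l : List (ℤ × K)) (hl : ∀ p ∈ l, p.1 = 0) :
    coprodExpr h₀ l = Coprod.inl (h₀ * (l.map Prod.snd).prod) := by
  induction l generalizing h₀ with
  | nil => simp [coprodExpr_nil]
  | cons p l ih =>
    rw [coprodExpr_cons, hl p List.mem_cons_self,
      ih p.2 fun q hq => hl q (List.mem_cons_of_mem _ hq)]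
    simp

theorem degree_ne_zero_of_map_eq_one {G : Type*} [Group G] {f : K ∗ Multiplicative ℤ →* G}
    (hf : Function.Injective (f.comp Coprod.inl)) {w : K ∗ Multiplicative ℤ} (hw : f w = 1)
    (hne : w ≠ 1) : degree w ≠ 0 := by
  intro h0
  obtain ⟨c, h₀, l, hc, hl⟩ := exists_conj_eq_coprodExpr_degree w
  have hl0 : ∀ p ∈ l, p.1 = 0 := fun p hp =>
    Int.natAbs_eq_zero.1 (List.sum_eq_zero_iff.1 (hl.trans h0) _ (List.mem_map_of_mem hp))
  rw [coprodExpr_of_forall_fst_eq_zero h₀ l hl0] at hc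
  have hx : h₀ * (l.map Prod.snd).prod = 1 :=
    hf (by simpa [hw] using (congrArg f hc).symm)
  rw [hx, map_one] at hc
  exact hne (by simpa using hc)

end Degree

theorem dvd_toAdd_snd_of_lift_eq_one {m k : ℕ} (hco : m.Coprime k)
    {H : Subgroup (FreeGroup Unit)} (hH : H ≤ Subgroup.zpowers (FreeGroup.of () ^ m))
    {w : H ∗ Multiplicative ℤ}
    (hw : Coprod.lift H.subtype (zpowersHom (FreeGroup Unit) (FreeGroup.of () ^ k)) w = 1) :
    (m : ℤ) ∣ Multiplicative.toAdd (Coprod.snd w) := by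
  let χ : FreeGroup Unit →* Multiplicative (ZMod m) := FreeGroup.lift fun _ => .ofAdd 1
  let ζ : Multiplicative ℤ →* Multiplicative (ZMod m) :=
    AddMonoidHom.toMultiplicative (Int.castAddHom (ZMod m))
  have hcomp : χ.comp (Coprod.lift H.subtype (zpowersHom _ (FreeGroup.of () ^ k))) =
      (ζ.comp Coprod.snd) ^ k := by
    refine Coprod.hom_ext (MonoidHom.ext fun x => ?_) (MonoidHom.ext fun t => ?_)
    · obtain ⟨j, hj⟩ := Subgroup.mem_zpowers_iff.1 (hH x.2)
      apply Multiplicative.toAdd.injective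
      simp [← hj, χ, ζ]
    · apply Multiplicative.toAdd.injective
      simp [χ, ζ]
      ring
  have hk : (k : ZMod m) * ((Multiplicative.toAdd (Coprod.snd w) : ℤ) : ZMod m) = 0 := by
    have := DFunLike.congr_fun hcomp w
    apply_fun Multiplicative.toAdd at this
    simpa [hw, χ, ζ, eq_comm] using this
  rw [← ZMod.intCast_zmod_eq_zero_iff_dvd]
  exact (ZMod.unitOfCoprime k hco.symm).isUnit.mul_right_eq_zero.1 hk

theorem stmt6_general (a : FreeGroup Unit) (ha : a = FreeGroup.of ())
    (m k : ℕ) (hm : 2 ≤ m) (hmeven : Even m) (hco : Nat.Coprime m k)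
    (H : Subgroup (FreeGroup Unit)) (hHdef : H = Subgroup.zpowers (a ^ m))
    (h : ↥H) (hh : (h : FreeGroup Unit) = a ^ m)
    (φ : ↥H ∗ Multiplicative ℤ →* FreeGroup Unit)
    (hφ : φ = Coprod.lift H.subtype (zpowersHom (FreeGroup Unit) (a ^ k))) :
    (∀ w ∈ φ.ker, w ≠ 1 → Even (degree w)) ∧
    (∀ s : ℕ, 1 ≤ s → ∀ w : ↥H ∗ Multiplicative ℤ,
      w = ⁅(Coprod.inl h : ↥H ∗ Multiplicative ℤ), (Coprod.inr (xgen ^ s) : ↥H ∗ Multiplicative ℤ)⁆ →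
      w ∈ φ.ker ∧ w ≠ 1 ∧ degree w = 2 * s) ∧
    {d : ℕ | ∃ w ∈ φ.ker, w ≠ 1 ∧ degree w = d} = {d : ℕ | Even d ∧ d ≠ 0} := by
  subst ha
  have even_of_mem_ker (w) (hw : w ∈ φ.ker) : Even (degree w) :=
    (even_degree_iff w).2 <| (Int.even_coe_nat m |>.2 hmeven).trans_dvd <|
      dvd_toAdd_snd_of_lift_eq_one hco hHdef.le (hφ ▸ MonoidHom.mem_ker.1 hw)
  have commutator (s : ℕ) (hs : 1 ≤ s) (w : ↥H ∗ Multiplicative ℤ)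
      (hw : w = ⁅(Coprod.inl h : ↥H ∗ Multiplicative ℤ),
        (Coprod.inr (xgen ^ s) : ↥H ∗ Multiplicative ℤ)⁆) :
      w ∈ φ.ker ∧ w ≠ 1 ∧ degree w = 2 * s := by
    subst hw
    have hh1 : h ≠ 1 := fun h1 => by
      simp [h1, eq_comm, FreeGroup.of_ne_one] at hh
      omega
    have hdeg := degree_commutator hh1 (t := xgen ^ s) (by simp [xgen]; omega)
    rw [show (Multiplicative.toAdd (xgen ^ s)).natAbs = s by simp [xgen]] at hdeg
    refine ⟨?_, fun h1 => by rw [h1, degree_one] at hdeg; omega, hdeg⟩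
    rw [hφ, MonoidHom.mem_ker, map_commutatorElement, commutatorElement_eq_one_iff_commute]
    simpa [hh, xgen] using ((Commute.refl (FreeGroup.of ())).pow_pow m k).pow_right s
  refine ⟨fun w hw _ => even_of_mem_ker w hw, commutator, ?_⟩
  ext d
  constructor
  · rintro ⟨w, hw, hne, rfl⟩
    exact ⟨even_of_mem_ker w hw, degree_ne_zero_of_map_eq_one
      (hφ ▸ fun x y hxy => by simpa using hxy) (MonoidHom.mem_ker.1 hw) hne⟩
  · rintro ⟨⟨s, rfl⟩, hs⟩
    obtain ⟨hmem, hne, hdeg⟩ := commutator s (by omega) _ rfl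
    exact ⟨_, hmem, hne, by omega⟩

/-- for `F = ⟨a⟩`, `H = ⟨h⟩` with `h = a^m`, `m ≥ 2` even, and `g = a^k`
with `k ≥ 1` coprime to `m`: every non-trivial equation in `I_g = ker φ_g` has even
degree; for every `s ≥ 1` the commutator `[h, x^s]` is a non-trivial element of `I_g` of
degree `2s`; hence `D_g = 2ℕ \ {0}`. -/
theorem stmt6 (a : FreeGroup Unit) (ha : a = FreeGroup.of ())
    (m k : ℕ) (hm : 2 ≤ m) (hmeven : Even m) (hk : 1 ≤ k) (hco : Nat.Coprime m k)
    (H : Subgroup (FreeGroup Unit)) (hHdef : H = Subgroup.zpowers (a ^ m))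
    (h : ↥H) (hh : (h : FreeGroup Unit) = a ^ m)
    (φ : ↥H ∗ Multiplicative ℤ →* FreeGroup Unit)
    (hφ : φ = Coprod.lift H.subtype (zpowersHom (FreeGroup Unit) (a ^ k))) :
    (∀ w ∈ φ.ker, w ≠ 1 → Even (degree w)) ∧
    (∀ s : ℕ, 1 ≤ s → ∀ w : ↥H ∗ Multiplicative ℤ,
      w = ⁅(Coprod.inl h : ↥H ∗ Multiplicative ℤ), (Coprod.inr (xgen ^ s) : ↥H ∗ Multiplicative ℤ)⁆ →
      w ∈ φ.ker ∧ w ≠ 1 ∧ degree w = 2 * s) ∧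
    {d : ℕ | ∃ w ∈ φ.ker, w ≠ 1 ∧ degree w = d} = {d : ℕ | Even d ∧ d ≠ 0} :=
  stmt6_general a ha m k hm hmeven hco H hHdef h hh φ hφ
end

section
/- Let F = ⟨a⟩, H = ⟨h⟩ with h = a^m for odd m ≥ 3, and g = a^k with k coprime to m. If w = h^{e_1} x^{f_1} ⋯ h^{e_r} x^{f_r} is a non-trivial cyclically reduced equation in I_g of odd degree d = |f_1| + ⋯ + |f_r|, then d ≥ m. -/
open Monoid
open scoped Monoid.Coprod

/-- for `F = ⟨a⟩`, `H = ⟨h⟩` with `h = a^m`, `m ≥ 3` odd, and `g = a^k`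
with `k` coprime to `m`: if `w = h^{e₁} x^{f₁} ⋯ h^{e_r} x^{f_r}` is a non-trivial
cyclically reduced equation in `I_g` of odd degree `d = |f₁| + ⋯ + |f_r|`, then `d ≥ m`. -/
theorem stmt7 (a : FreeGroup Unit) (ha : a = FreeGroup.of ())
    (m k : ℕ) (hm : 3 ≤ m) (hmodd : Odd m) (hco : Nat.Coprime m k)
    (H : Subgroup (FreeGroup Unit)) (hHdef : H = Subgroup.zpowers (a ^ m))
    (h : ↥H) (hh : (h : FreeGroup Unit) = a ^ m)
    (φ : ↥H ∗ Multiplicative ℤ →* FreeGroup Unit)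
    (hφ : φ = Coprod.lift H.subtype (zpowersHom (FreeGroup Unit) (a ^ k)))
    (r : ℕ) (hr : 1 ≤ r) (e f : Fin r → ℤ)
    (he : ∀ i, e i ≠ 0) (hf : ∀ i, f i ≠ 0)
    (w : ↥H ∗ Multiplicative ℤ)
    (hw : w = (List.ofFn fun i => Coprod.inl (h ^ e i) * Coprod.inr (xgen ^ f i)).prod)
    (hker : w ∈ φ.ker)
    (d : ℕ) (hd : d = ∑ i, (f i).natAbs) (hodd : Odd d) :
    m ≤ d := by
  classical
  set ψ : FreeGroup Unit →* Multiplicative ℤ :=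
    FreeGroup.lift (fun _ => Multiplicative.ofAdd (1 : ℤ)) with hψ
  have hψa : ψ a = Multiplicative.ofAdd (1 : ℤ) := by rw [ha]; exact FreeGroup.lift_apply_of
  have hφw : φ w = 1 := hker
  have hterm : ∀ i : Fin r,
      ψ (φ (Coprod.inl (h ^ e i) * Coprod.inr (xgen ^ f i)))
        = Multiplicative.ofAdd ((m : ℤ) * e i + (k : ℤ) * f i) := by
    intro i
    rw [hφ]
    simp only [map_mul, Coprod.lift_apply_inl, Coprod.lift_apply_inr,
      Subgroup.coe_subtype, SubgroupClass.coe_zpow, hh, zpowersHom_apply]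
    rw [← zpow_natCast a m, ← zpow_natCast a k, ← zpow_mul, ← zpow_mul, map_zpow, map_zpow,
      hψa]
    have hx : ∀ z : ℤ, (Multiplicative.ofAdd (1 : ℤ)) ^ z = Multiplicative.ofAdd z := by
      intro z; rw [← ofAdd_zsmul]; simp
    have ht : Multiplicative.toAdd (xgen ^ f i) = f i := by simp [xgen]
    rw [ht, hx, hx, ← ofAdd_add]
  have hsum : (∑ i, ((m : ℤ) * e i + (k : ℤ) * f i)) = 0 := by
    have h2 : ψ (φ w) = Multiplicative.ofAdd (∑ i, ((m : ℤ) * e i + (k : ℤ) * f i)) := by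
      rw [hw, map_list_prod, map_list_prod, List.map_map, List.map_ofFn, List.prod_ofFn]
      simp only [Function.comp_apply]
      exact (Finset.prod_congr rfl fun i _ => hterm i).trans (ofAdd_sum _ _).symm
    rw [hφw, map_one] at h2
    exact (ofAdd_eq_one.mp h2.symm)
  set E := ∑ i, e i with hE
  set F := ∑ i, f i with hF
  have hmE : (m : ℤ) * E + (k : ℤ) * F = 0 := by
    rw [hE, hF, Finset.mul_sum, Finset.mul_sum, ← Finset.sum_add_distrib]
    exact hsum
  have hFodd : Odd F := by
    have heven : Even ((d : ℤ) - F) := by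
      have : (d : ℤ) - F = ∑ i, (((f i).natAbs : ℤ) - f i) := by
        rw [hd, hF, Finset.sum_sub_distrib]; push_cast; ring
      rw [this]
      apply Finset.even_sum
      intro i _
      rcases le_or_gt 0 (f i) with hp | hn
      · simp [Int.natAbs_of_nonneg hp]
      · rw [Int.ofNat_natAbs_of_nonpos hn.le]
        exact ⟨-f i, by ring⟩
    have : Odd (d : ℤ) := by exact_mod_cast hodd
    rcases this with ⟨t, ht⟩
    rcases heven with ⟨s, hs⟩
    exact ⟨t - s, by omega⟩
  have hFne : F ≠ 0 := by intro hF0; rw [hF0] at hFodd; simpa using hFodd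
  have hdvd : (m : ℤ) ∣ (k : ℤ) * F := ⟨-E, by linarith [hmE]⟩
  have hcop : IsCoprime (m : ℤ) (k : ℤ) := by
    rw [Int.isCoprime_iff_gcd_eq_one]; exact_mod_cast hco
  have hdvdF : (m : ℤ) ∣ F := hcop.dvd_of_dvd_mul_left hdvd
  have h1 : (m : ℤ) ≤ |F| := Int.le_of_dvd (abs_pos.mpr hFne) ((dvd_abs _ _).mpr hdvdF)
  have h2 : |F| ≤ (d : ℤ) := by
    have hdz : (d : ℤ) = ∑ i, ((f i).natAbs : ℤ) := by rw [hd]; push_cast; rfl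
    rw [hF, hdz]
    calc |∑ i, f i| ≤ ∑ i, |f i| := Finset.abs_sum_le_sum_abs _ _
    _ = ∑ i, ((f i).natAbs : ℤ) := Finset.sum_congr rfl fun i _ => Int.abs_eq_natAbs _
  exact_mod_cast h1.trans h2
end

section
/- Let F = ⟨a⟩, m ≥ 1 and k ≥ 0 coprime integers, h = a^m, g = a^k. Define words w_{m,k}(h,x) ∈ ⟨h⟩ * ⟨x⟩ recursively by w_{1,0}(h,x) = x⁻¹, w_{m,k}(h,x) = w_{m-k,k}(h x⁻¹, x) for m > k, and w_{m,k}(h,x) = w_{m,k-m}(h, x h⁻¹) for m ≤ k with k > 0. Then w_{m,k}(h,x) contains exactly k occurrences of h, no occurrence of h⁻¹, no occurrence of x, and exactly m occurrences of x⁻¹; in particular w_{m,k} has degree m and lies in ker φ_g. -/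
/-- The recursively defined words `w_{m,k}(h,x)`:
`w_{1,0}(h,x) = x⁻¹`, `w_{m,k}(h,x) = w_{m-k,k}(h x⁻¹, x)` for `m > k > 0`, and
`w_{m,k}(h,x) = w_{m,k-m}(h, x h⁻¹)` for `0 < m ≤ k`.  (Values at the pairs `(0,k)` and
`(m,0)` with `m ≥ 2`, which never arise from coprime pairs, are junk values.) -/
def wmk {G : Type*} [Group G] (m k : ℕ) (h x : G) : G :=
  if m = 0 then 1
  else if k = 0 then x⁻¹
  else if k < m then wmk (m - k) k (h * x⁻¹) x
  else wmk m (k - m) h (x * h⁻¹)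
termination_by m + k
decreasing_by all_goals omega

/-- Expansion substitution for the case `k < m` : `h ↦ h, x⁻¹ ↦ x⁻¹` where the new `h` is
`h * x⁻¹`, so `true ↦ [true, false]`, `false ↦ [false]`. -/
private def e1 : Bool → List Bool := fun b => bif b then [true, false] else [false]

/-- Expansion substitution for the case `m ≤ k` : `false ↦ [true, false]`, `true ↦ [true]`. -/
private def e2 : Bool → List Bool := fun b => bif b then [true] else [true, false]

private lemma cnt1t (L : List Bool) : (L.flatMap e1).count true = L.count true := by
  induction L with
  | nil => rfl
  | cons b L ih => cases b <;> simp [List.flatMap_cons, e1, ih, List.count_cons]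

private lemma cnt1f (L : List Bool) :
    (L.flatMap e1).count false = L.count false + L.count true := by
  induction L with
  | nil => rfl
  | cons b L ih =>
    have hlen := List.count_false_add_count_true L
    cases b <;>
    · simp only [List.flatMap_cons, e1, cond_false, cond_true, List.singleton_append,
        List.cons_append, List.count_cons, ih]
      simp
      omega

private lemma cnt2t (L : List Bool) :
    (L.flatMap e2).count true = L.count true + L.count false := by
  induction L with
  | nil => rfl
  | cons b L ih =>
    have hlen := List.count_false_add_count_true L
    cases b <;>
    · simp only [List.flatMap_cons, e2, cond_false, cond_true, List.singleton_append,
        List.cons_append, List.count_cons, ih]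
      simp
      omega

private lemma cnt2f (L : List Bool) : (L.flatMap e2).count false = L.count false := by
  induction L with
  | nil => rfl
  | cons b L ih => cases b <;> simp [List.flatMap_cons, e2, ih, List.count_cons]

private lemma prod1 {G : Type*} [Group G] (h x : G) (L : List Bool) :
    ((L.flatMap e1).map (fun b => bif b then h else x⁻¹)).prod =
      (L.map (fun b => bif b then h * x⁻¹ else x⁻¹)).prod := by
  induction L with
  | nil => rfl
  | cons b L ih => cases b <;> simp [List.flatMap_cons, e1, ih, mul_assoc]

private lemma prod2 {G : Type*} [Group G] (h x : G) (L : List Bool) :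
    ((L.flatMap e2).map (fun b => bif b then h else x⁻¹)).prod =
      (L.map (fun b => bif b then h else (x * h⁻¹)⁻¹)).prod := by
  induction L with
  | nil => rfl
  | cons b L ih => cases b <;> simp [List.flatMap_cons, e2, ih, mul_assoc]

/-- Key structural lemma: for coprime `m ≥ 1`, `k`, in any group, `wmk m k h x` is a
product of `k` copies of `h` (coded `true`) and `m` copies of `x⁻¹` (coded `false`). -/
private lemma wmk_eq : ∀ n m k : ℕ, m + k ≤ n → 1 ≤ m → Nat.Coprime m k →
    ∀ {G : Type*} [Group G] (h x : G), ∃ L : List Bool,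
      L.count true = k ∧ L.count false = m ∧
      wmk m k h x = (L.map (fun b => bif b then h else x⁻¹)).prod := by
  intro n
  induction n with
  | zero => intro m k hn hm; omega
  | succ n ih =>
    intro m k hn hm hco G _ h x
    rw [wmk]
    rcases Nat.eq_zero_or_pos k with hk | hk
    · subst hk
      have hm1 : m = 1 := Nat.coprime_zero_right m |>.mp hco
      subst hm1
      exact ⟨[false], by simp, by simp, by simp⟩
    · by_cases hkm : k < m
      · rw [if_neg (by omega), if_neg (by omega), if_pos hkm]
        have hco' : Nat.Coprime (m - k) k := by
          have := Nat.coprime_sub_self_left (m := k) (n := m) (by omega)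
          exact this.mpr (Nat.Coprime.coprime_dvd_left dvd_rfl hco)
        obtain ⟨L, hLt, hLf, hLe⟩ :=
          ih (m - k) k (by omega) (by omega) hco' (h * x⁻¹) x
        refine ⟨L.flatMap e1, ?_, ?_, ?_⟩
        · rw [cnt1t, hLt]
        · rw [cnt1f, hLt, hLf]; omega
        · rw [hLe, prod1]
      · rw [if_neg (by omega), if_neg (by omega), if_neg hkm]
        have hco' : Nat.Coprime m (k - m) := by
          rw [Nat.coprime_sub_self_right (by omega)]; exact hco
        obtain ⟨L, hLt, hLf, hLe⟩ :=
          ih m (k - m) (by omega) hm hco' h (x * h⁻¹)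
        refine ⟨L.flatMap e2, ?_, ?_, ?_⟩
        · rw [cnt2t, hLt, hLf]; omega
        · rw [cnt2f, hLf]
        · rw [hLe, prod2]

/-- The letter coding: `true` (an occurrence of `h`) becomes the letter `(false, true)`
(the generator `false` with positive sign), `false` (an occurrence of `x⁻¹`) becomes
`(true, false)`. -/
private def gl : Bool → Bool × Bool := fun b => (!b, b)

private lemma prod_eq_mk (L : List Bool) :
    (L.map (fun b => bif b then FreeGroup.of false else (FreeGroup.of true)⁻¹)).prod =
      FreeGroup.mk (L.map gl) := by
  induction L with
  | nil => simp [FreeGroup.one_eq_mk]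
  | cons b L ih =>
    rw [List.map_cons, List.prod_cons, ih, List.map_cons]
    have hb : (bif b then FreeGroup.of false else (FreeGroup.of true)⁻¹) =
        FreeGroup.mk [gl b] := by
      cases b <;> simp [gl, FreeGroup.of, FreeGroup.inv_mk, FreeGroup.invRev]
    rw [hb, FreeGroup.mul_mk, List.singleton_append]

private lemma reduce_map_gl (L : List Bool) :
    FreeGroup.reduce (L.map gl) = L.map gl := by
  induction L with
  | nil => rfl
  | cons b L ih =>
    rw [List.map_cons, FreeGroup.reduce.cons, ih]
    cases L with
    | nil => rfl
    | cons b' L' =>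
      rw [List.map_cons]
      have hne : ¬((gl b).1 = (gl b').1 ∧ (gl b).2 = !(gl b').2) := by
        cases b <;> cases b' <;> simp [gl]
      dsimp only
      rw [if_neg hne]

private lemma zpow_prod (a : FreeGroup Unit) (m k : ℤ) (L : List Bool) :
    (L.map (fun b => bif b then a ^ m else a ^ (-k))).prod =
      a ^ (m * L.count true - k * L.count false) := by
  induction L with
  | nil => simp
  | cons b L ih =>
    cases b <;> simp only [List.map_cons, List.prod_cons, ih, cond_true, cond_false,
      List.count_cons, ← zpow_add] <;>
    · congr 1
      simp
      ring

private lemma count_map_gl_ft (L : List Bool) :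
    (L.map gl).count (false, true) = L.count true := by
  induction L with
  | nil => rfl
  | cons b L ih => cases b <;> simp [gl, List.count_cons, ih]

private lemma count_map_gl_tf (L : List Bool) :
    (L.map gl).count (true, false) = L.count false := by
  induction L with
  | nil => rfl
  | cons b L ih => cases b <;> simp [gl, List.count_cons, ih]

/-- for coprime `m ≥ 1` and `k ≥ 0`, the word `w_{m,k}(h,x)` in the free group
on the two generators `h, x` contains exactly `k` occurrences of `h`, no occurrence of
`h⁻¹`, no occurrence of `x`, and exactly `m` occurrences of `x⁻¹`; moreover it lies in the
kernel of the evaluation map `h ↦ a^m`, `x ↦ a^k` to the free group `⟨a⟩`. -/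
theorem stmt8 (m k : ℕ) (hm : 1 ≤ m) (hco : Nat.Coprime m k)
    (h x : FreeGroup Bool) (hh : h = FreeGroup.of false) (hx : x = FreeGroup.of true)
    (a : FreeGroup Unit) (ha : a = FreeGroup.of ())
    (φ : FreeGroup Bool →* FreeGroup Unit)
    (hφ : φ = FreeGroup.lift (fun s => bif s then a ^ k else a ^ m)) :
    (wmk m k h x).toWord.count (false, true) = k ∧
    (wmk m k h x).toWord.count (false, false) = 0 ∧
    (wmk m k h x).toWord.count (true, true) = 0 ∧
    (wmk m k h x).toWord.count (true, false) = m ∧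
    wmk m k h x ∈ φ.ker := by
  obtain ⟨L, hLt, hLf, hLe⟩ := wmk_eq (m + k) m k le_rfl hm hco h x
  subst hh hx
  rw [hLe, prod_eq_mk]
  have hword : (FreeGroup.mk (L.map gl)).toWord = L.map gl := by
    rw [FreeGroup.toWord_mk, reduce_map_gl]
  refine ⟨?_, ?_, ?_, ?_, ?_⟩
  · rw [hword, count_map_gl_ft, hLt]
  · rw [hword, List.count_eq_zero]
    intro hmem
    obtain ⟨b, _, hb⟩ := List.mem_map.mp hmem
    cases b <;> simp [gl] at hb
  · rw [hword, List.count_eq_zero]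
    intro hmem
    obtain ⟨b, _, hb⟩ := List.mem_map.mp hmem
    cases b <;> simp [gl] at hb
  · rw [hword, count_map_gl_tf, hLf]
  · rw [MonoidHom.mem_ker, ← prod_eq_mk, map_list_prod, List.map_map]
    have hcomp : φ ∘ (fun b => bif b then FreeGroup.of false else (FreeGroup.of true)⁻¹) =
        fun b => bif b then a ^ (m : ℤ) else a ^ (-(k : ℤ)) := by
      funext b
      cases b <;> simp [hφ, zpow_natCast]
    rw [hcomp, zpow_prod, hLt, hLf]
    simp [mul_comm]
end

section
/- Let F₂ = ⟨a,b⟩, H = ⟨b, ababa⟩ with h₁ = b, h₂ = ababa, and g = a. Then the normal closure of the single element h₂⁻¹ x h₁ x h₁ x in H * ⟨x⟩ equals I_g = ker φ_g. -/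
open Monoid
open scoped Monoid.Coprod

/-- in `F₂ = ⟨a,b⟩` with `H = ⟨h₁,h₂⟩`, `h₁ = b`, `h₂ = ababa`, and
`g = a`, the normal closure of the single element `h₂⁻¹ x h₁ x h₁ x` in `H ∗ ⟨x⟩`
equals `I_g = ker φ_g`. -/
theorem stmt10 (a b : FreeGroup Bool) (ha : a = FreeGroup.of true) (hb : b = FreeGroup.of false)
    (H : Subgroup (FreeGroup Bool)) (hHdef : H = Subgroup.closure {b, a * b * a * b * a})
    (h₁ h₂ : ↥H) (hh₁ : (h₁ : FreeGroup Bool) = b)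
    (hh₂ : (h₂ : FreeGroup Bool) = a * b * a * b * a)
    (φ : ↥H ∗ Multiplicative ℤ →* FreeGroup Bool)
    (hφ : φ = Coprod.lift H.subtype (zpowersHom (FreeGroup Bool) a))
    (w₀ : ↥H ∗ Multiplicative ℤ)
    (hw₀ : w₀ = (Coprod.inl h₂)⁻¹ * Coprod.inr xgen * Coprod.inl h₁ * Coprod.inr xgen *
      Coprod.inl h₁ * Coprod.inr xgen) :
    Subgroup.normalClosure {w₀} = φ.ker := by
  have hφinr : φ (Coprod.inr xgen) = a := by
    simp [hφ, xgen]
  have hφinl : ∀ h : ↥H, φ (Coprod.inl h) = (h : FreeGroup Bool) := by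
    simp [hφ]
  have hφw₀ : φ w₀ = 1 := by
    simp only [hw₀, map_mul, map_inv, hφinr, hφinl, hh₁, hh₂]
    group
  set N := Subgroup.normalClosure {w₀} with hN
  have hw₀N : w₀ ∈ N := Subgroup.subset_normalClosure rfl
  apply le_antisymm
  · exact Subgroup.normalClosure_le_normal (by simpa [Set.singleton_subset_iff,
      MonoidHom.mem_ker] using hφw₀)
  · -- hard direction
    set π := QuotientGroup.mk' N with hπ
    set ψ := FreeGroup.lift (fun t : Bool =>
      if t then π (Coprod.inr xgen) else π (Coprod.inl h₁)) with hψ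
    have hrel : π (Coprod.inl h₂) =
        π (Coprod.inr xgen) * π (Coprod.inl h₁) * π (Coprod.inr xgen) * π (Coprod.inl h₁) *
          π (Coprod.inr xgen) := by
      have hmem : (Coprod.inl h₂)⁻¹ * Coprod.inr xgen * Coprod.inl h₁ * Coprod.inr xgen *
          Coprod.inl h₁ * Coprod.inr xgen ∈ N := hw₀ ▸ hw₀N
      have this : π ((Coprod.inl h₂)⁻¹ * Coprod.inr xgen * Coprod.inl h₁ * Coprod.inr xgen *
          Coprod.inl h₁ * Coprod.inr xgen) = 1 := (QuotientGroup.eq_one_iff _).mpr hmem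
      simp only [map_mul, map_inv, mul_assoc] at this
      rw [inv_mul_eq_one] at this
      rw [this]
      simp [mul_assoc]
    have hψa : ψ a = π (Coprod.inr xgen) := by simp [hψ, ha]
    have hψb : ψ b = π (Coprod.inl h₁) := by simp [hψ, hb]
    have key : ψ.comp φ = π := by
      apply Coprod.hom_ext
      · ext h
        simp only [MonoidHom.comp_apply, hφinl]
        -- goal: ψ ↑h = π (Coprod.inl h)
        have h2 : (h : FreeGroup Bool) ∈ Subgroup.closure {b, a * b * a * b * a} := by
          rw [← hHdef]; exact h.2
        have main : ∀ y (hy : y ∈ Subgroup.closure {b, a * b * a * b * a}),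
            ψ y = π (Coprod.inl ⟨y, hHdef ▸ hy⟩) := by
          intro y hy
          induction hy using Subgroup.closure_induction with
          | mem x hx =>
            rcases hx with rfl | rfl
            · rw [hψb]
              congr 1
              exact congrArg Coprod.inl (Subtype.ext hh₁)
            · have : (⟨a * b * a * b * a, hHdef ▸ Subgroup.subset_closure (by simp)⟩ : ↥H) = h₂ :=
                Subtype.ext hh₂.symm
              rw [map_mul, map_mul, map_mul, map_mul, hψa, hψb, ← hrel]
              congr 1
              exact congrArg Coprod.inl (Subtype.ext hh₂)
          | one =>
            generalize_proofs hn hp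
            rw [show (⟨1, hp⟩ : ↥H) = 1 from Subtype.ext rfl]
            simp
          | mul x y hx hy ihx ihy =>
            rw [map_mul, ihx, ihy, ← map_mul, ← map_mul]
            rfl
          | inv x hx ihx =>
            rw [map_inv, ihx, ← map_inv, ← map_inv]
            rfl
        have := main (h : FreeGroup Bool) h2
        rwa [show (⟨(h : FreeGroup Bool), hHdef ▸ h2⟩ : ↥H) = h from Subtype.ext rfl] at this
      · apply MonoidHom.ext_mint
        simp only [MonoidHom.comp_apply]
        rw [show Coprod.inr (Multiplicative.ofAdd 1) = (Coprod.inr xgen : ↥H ∗ Multiplicative ℤ) from rfl,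
          hφinr, hψa]
    intro w hw
    have : π w = 1 := by
      rw [← key]
      simp only [MonoidHom.comp_apply, MonoidHom.mem_ker.mp hw, map_one]
    exact (QuotientGroup.eq_one_iff w).mp this
end

section
/- Let G be a graph and σ : I_l → G a combinatorial path with a reduction process (s₁,t₁),…,(s_m,t_m). Then for all 1 ≤ α < β ≤ m, the edges s_α, t_α, s_β, t_β appear along the interval in one of the orders: s_α, t_α, s_β, t_β, or s_β, t_β, s_α, t_α, or s_β, s_α, t_α, t_β. In particular the chords joining paired edges can be drawn without crossings. -/
/-- A word in letters `(a, s) : α × Bool` (the letter `a` with orientation `s`), modelling a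
combinatorial path in a graph: position `i` of the list is the `i`-th edge of the subdivided
interval, recording which edge of the graph it crosses and with which orientation.

`IsReductionProcess w P` says that the list of pairs of positions
`P = [(s₁,t₁),…,(s_m,t_m)]` is a reduction process for `w`: (i) the positions
`s₁,t₁,…,s_m,t_m` are pairwise distinct (valid) positions; (ii) `s_k < t_k` for each `k`;
(iii) after collapsing the edges of the earlier pairs, `s_k` and `t_k` are adjacent, i.e.
every position strictly between them belongs to an earlier pair; (iv) positions `s_k` and
`t_k` carry the same letter with opposite orientations. -/
def IsReductionProcess {α : Type*} (w : List (α × Bool)) (P : List (ℕ × ℕ)) : Prop :=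
  (∀ p ∈ P, p.1 < p.2 ∧ p.2 < w.length) ∧
  (P.flatMap fun p => [p.1, p.2]).Nodup ∧
  (∀ k, (hk : k < P.length) → ∀ j, (P[k]).1 < j → j < (P[k]).2 →
    ∃ k', ∃ (hk' : k' < P.length), k' < k ∧ (j = (P[k']).1 ∨ j = (P[k']).2)) ∧
  (∀ p ∈ P, ∃ a s, w[p.1]? = some (a, s) ∧ w[p.2]? = some (a, !s))

/-- in any reduction process, for `α < β` the edges `s_α, t_α, s_β, t_β`
appear along the interval in one of the orders `s_α, t_α, s_β, t_β`, or
`s_β, t_β, s_α, t_α`, or `s_β, s_α, t_α, t_β`; i.e. the pairing is non-crossing. -/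
theorem stmt12 {α : Type*} (w : List (α × Bool)) (P : List (ℕ × ℕ))
    (hP : IsReductionProcess w P)
    (i j : ℕ) (hi : i < P.length) (hj : j < P.length) (hij : i < j) :
    (P[i]).2 < (P[j]).1 ∨ (P[j]).2 < (P[i]).1 ∨
      ((P[j]).1 < (P[i]).1 ∧ (P[i]).2 < (P[j]).2) := by
  obtain ⟨h1, h2, h3, h4⟩ := hP
  have hpw := (List.nodup_flatMap.mp h2).2
  have hdisj : ∀ k k' (hk : k < P.length) (hk' : k' < P.length), k ≠ k' →
      ∀ x, (x = (P[k]).1 ∨ x = (P[k]).2) → (x = (P[k']).1 ∨ x = (P[k']).2) → False := by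
    intro k k' hk hk' hne x hx hx'
    rcases Nat.lt_or_ge k k' with h | h
    · have := List.pairwise_iff_getElem.mp hpw k k' hk hk' h
      have hmem : x ∈ [(P[k]).1, (P[k]).2] := by rcases hx with h|h <;> simp [h]
      have hmem' : x ∈ [(P[k']).1, (P[k']).2] := by rcases hx' with h|h <;> simp [h]
      exact this hmem hmem'
    · have hlt : k' < k := lt_of_le_of_ne h (Ne.symm hne)
      have := List.pairwise_iff_getElem.mp hpw k' k hk' hk hlt
      have hmem : x ∈ [(P[k]).1, (P[k]).2] := by rcases hx with h|h <;> simp [h]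
      have hmem' : x ∈ [(P[k']).1, (P[k']).2] := by rcases hx' with h|h <;> simp [h]
      exact this hmem' hmem
  set a := (P[i]).1 with ha
  set b := (P[i]).2 with hb
  set c := (P[j]).1 with hc
  set d := (P[j]).2 with hd
  have hab : a < b := (h1 _ (List.getElem_mem hi)).1
  have hcd : c < d := (h1 _ (List.getElem_mem hj)).1
  by_contra hcon
  push_neg at hcon
  obtain ⟨hcb, had, h3rd⟩ := hcon
  have hac : a ≠ c := fun h => hdisj i j hi hj (Nat.ne_of_lt hij) a (Or.inl rfl) (Or.inl h)
  have hbd : b ≠ d := fun h => hdisj i j hi hj (Nat.ne_of_lt hij) b (Or.inr rfl) (Or.inr h)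
  have hcb' : c < b := lt_of_le_of_ne hcb
    (fun h => hdisj i j hi hj (Nat.ne_of_lt hij) c (Or.inr h) (Or.inl rfl))
  have had' : a < d := lt_of_le_of_ne had
    (fun h => hdisj i j hi hj (Nat.ne_of_lt hij) a (Or.inl rfl) (Or.inr h))
  rcases lt_or_gt_of_ne hac with hlt | hgt
  · -- a < c < b : c is strictly inside pair i, so belongs to an earlier pair k' < i
    obtain ⟨k', hk', hk'i, hor⟩ := h3 i hi c hlt hcb'
    exact hdisj j k' hj hk' (Nat.ne_of_gt (hk'i.trans hij)) c (Or.inl rfl) hor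
  · -- c < a : need b < d; otherwise a < d < b and d is inside pair i
    have hdb : d < b := lt_of_le_of_ne (h3rd hgt) hbd.symm
    obtain ⟨k', hk', hk'i, hor⟩ := h3 i hi d had' hdb
    exact hdisj j k' hj hk' (Nat.ne_of_gt (hk'i.trans hij)) d (Or.inr rfl) hor
end

section
/- Let H ≤ F_n be finitely generated and g ∈ F_n. Then g depends on H (i.e. ker φ_g ≠ 1) if and only if rank⟨H, g⟩ ≤ rank H. -/
/-
The evaluation map `φ_g : H ∗ ⟨x⟩ → F_n` surjects onto `⟨H, g⟩`. Both groups are free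
(Nielsen–Schreier), the source of rank `rank H + 1`, so `rank ⟨H, g⟩ ≤ rank H + 1`. If `φ_g` is
injective it is an isomorphism and the ranks are equal. Conversely, if `rank ⟨H, g⟩ = rank H + 1`,
the target is isomorphic to the source, and `φ_g` becomes a surjective endomorphism of a finitely
generated free group, hence injective: such groups are Hopfian because they are residually finite.
Residual finiteness holds because a word for `w ≠ 1` moves `1` to `w` inside the finite set of
its suffixes, once each generator's partial action there by left multiplication is completed to
a permutation.
-/

open Monoid
open scoped Monoid.Coprod

open Function

universe u

namespace Group

variable {G Q : Type*} [Group G] [Group Q]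

lemma exists_injective_monoidHom_restrict [FG G] :
    ∃ S : Finset G, S.card = rank G ∧ Injective fun f : G →* Q => fun s : S => f s := by
  obtain ⟨S, hcard, hS⟩ := rank_spec G
  refine ⟨S, hcard, fun f f' h => MonoidHom.eq_of_eqOn_dense hS fun s hs => ?_⟩
  exact congrFun h ⟨s, hs⟩

instance finite_monoidHom [FG G] [Finite Q] : Finite (G →* Q) := by
  obtain ⟨S, -, hinj⟩ := exists_injective_monoidHom_restrict (G := G) (Q := Q)
  exact Finite.of_injective _ hinj

lemma card_monoidHom_le [FG G] [Finite Q] : Nat.card (G →* Q) ≤ Nat.card Q ^ rank G := by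
  obtain ⟨S, hcard, hinj⟩ := exists_injective_monoidHom_restrict (G := G) (Q := Q)
  calc Nat.card (G →* Q) ≤ Nat.card (S → Q) := Nat.card_le_card_of_injective _ hinj
    _ = Nat.card Q ^ rank G := by rw [Nat.card_fun, Nat.card_eq_finsetCard, hcard]

end Group

lemma Equiv.Perm.exists_perm_coe_apply_eq_of_mem {X : Type*} (σ : Perm X) (P : Set X) [Finite P] :
    ∃ τ : Perm P, ∀ x : P, σ x ∈ P → (τ x : X) = σ x := by
  classical
  let e : {x : P // σ x ∈ P} ≃ {y : P // σ.symm y ∈ P} :=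
    { toFun x := ⟨⟨σ x, x.2⟩, by simp⟩
      invFun y := ⟨⟨σ.symm y, y.2⟩, by simp⟩
      left_inv x := by simp
      right_inv y := by simp }
  exact ⟨e.extendSubtype, fun x hx => by rw [e.extendSubtype_apply_of_mem x hx]; rfl⟩

namespace FreeGroup

variable {X : Type*}

lemma finite_of_fg [Group.FG (FreeGroup X)] : Finite X := by
  classical
  have : Finite (X → Multiplicative (ZMod 2)) := Finite.of_equiv _ FreeGroup.lift.symm
  refine Finite.of_injective (fun x => Pi.mulSingle x (Multiplicative.ofAdd (1 : ZMod 2)))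
    fun x y h => ?_
  by_contra hxy
  simpa [Pi.mulSingle_apply, hxy] using congrFun h x

instance [Finite X] : Group.FG (FreeGroup X) :=
  Group.fg_iff.2 ⟨Set.range FreeGroup.of, FreeGroup.closure_range_of X, Set.finite_range _⟩

lemma rank_eq_card [Finite X] : Group.rank (FreeGroup X) = Nat.card X := by
  classical
  have := Fintype.ofFinite X
  apply le_antisymm
  · calc Group.rank (FreeGroup X) ≤ (Finset.univ.image FreeGroup.of).card :=
          Group.rank_le (by simp [FreeGroup.closure_range_of])
      _ ≤ Nat.card X := by
          rw [Nat.card_eq_fintype_card, ← Finset.card_univ]; exact Finset.card_image_le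
  · have h := Group.card_monoidHom_le (G := FreeGroup X) (Q := Multiplicative (ZMod 2))
    rw [Nat.card_congr FreeGroup.lift.symm, Nat.card_fun,
      show Nat.card (Multiplicative (ZMod 2)) = 2 from Nat.card_zmod 2] at h
    exact (Nat.pow_le_pow_iff_right one_lt_two).1 h

instance : Group.ResiduallyFinite (FreeGroup X) := by
  classical
  refine Group.residuallyFinite_of_forall_exists_finite_monoidHom fun w hw => ?_
  let P : Set (FreeGroup X) := mk '' {s | s ∈ w.toWord.tails}
  have : Finite P := ((List.finite_toSet _).image _).to_subtype
  have hP {s} (hs : s <:+ w.toWord) : mk s ∈ P := ⟨s, (List.mem_tails _ _).2 hs, rfl⟩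
  choose τ hτ using fun a => (Equiv.mulLeft (of a)).exists_perm_coe_apply_eq_of_mem P
  let ρ : FreeGroup X →* Equiv.Perm P := FreeGroup.lift τ
  -- `ρ (mk s)` moves `1` to `mk s` along the suffixes of `s`, all of which lie in `P`
  have key : ∀ s, s <:+ w.toWord → (ρ (mk s) ⟨1, hP List.nil_suffix⟩ : FreeGroup X) = mk s := by
    intro s hs
    induction s with
    | nil => rfl
    | cons x s ih =>
      have hs' := (List.suffix_cons x s).trans hs
      obtain ⟨a, _ | _⟩ := x
      · have hcons : mk ((a, false) :: s) = (of a)⁻¹ * mk s := by rw [of, inv_mk, mul_mk]; rfl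
        have hτa : τ a ⟨_, hcons ▸ hP hs⟩ = ⟨mk s, hP hs'⟩ :=
          Subtype.ext <| (hτ a _ (by simpa using hP hs')).trans (by simp)
        rw [hcons, _root_.map_mul, Equiv.Perm.mul_apply, _root_.map_inv, lift_apply_of,
          show ρ (mk s) _ = ⟨mk s, hP hs'⟩ from Subtype.ext (ih hs'), ← hτa]
        exact congrArg Subtype.val (Equiv.Perm.inv_eq_iff_eq.2 rfl)
      · have hcons : mk ((a, true) :: s) = of a * mk s := by rw [of, mul_mk]; rfl
        rw [hcons, _root_.map_mul, Equiv.Perm.mul_apply, lift_apply_of,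
          show ρ (mk s) _ = ⟨mk s, hP hs'⟩ from Subtype.ext (ih hs'),
          hτ a _ (by simpa [hcons] using hP hs)]
        rfl
  refine ⟨Equiv.Perm P, inferInstance, inferInstance, ρ, fun h => hw ?_⟩
  have := key w.toWord List.suffix_rfl
  simp only [mk_toWord, h] at this
  exact this.symm

end FreeGroup

theorem Group.injective_of_surjective_of_residuallyFinite {G : Type*} [Group G] [FG G]
    [ResiduallyFinite G] {f : G →* G} (hf : Surjective f) : Injective f := by
  refine (injective_iff_map_eq_one f).2 fun x hx => ?_
  by_contra hx1
  obtain ⟨N, hxN⟩ := exists_finiteIndexNormalSubgroup_notMem x hx1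
  -- precomposition with `f` is injective on the finite set `Hom(G, G/N)`, hence surjective
  obtain ⟨ψ, hψ⟩ := Finite.injective_iff_surjective.1
    (fun _ _ h => (MonoidHom.cancel_right hf).1 h) (QuotientGroup.mk' N.toSubgroup)
  apply hxN
  change x ∈ N.toSubgroup
  rw [← QuotientGroup.eq_one_iff (N := N.toSubgroup), ← QuotientGroup.mk'_apply, ← hψ,
    MonoidHom.comp_apply, hx, map_one]

theorem Group.ResiduallyFinite.of_injective {G G' : Type*} [Group G] [Group G']
    [ResiduallyFinite G'] (f : G →* G') (hf : Injective f) : ResiduallyFinite G :=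
  residuallyFinite_of_forall_exists_finite_monoidHom fun g hg => by
    obtain ⟨N, hN⟩ := exists_finiteIndexNormalSubgroup_notMem (f g) ((map_ne_one_iff f hf).2 hg)
    exact ⟨_, _, inferInstance, (QuotientGroup.mk' N.toSubgroup).comp f,
      fun h => hN (by simpa using h : f g ∈ N.toSubgroup)⟩

instance Monoid.Coprod.fg {G G' : Type*} [Group G] [Group G'] [Group.FG G] [Group.FG G'] :
    Group.FG (G ∗ G') := by
  obtain ⟨S, hS, hSfin⟩ := Group.fg_iff.1 ‹Group.FG G›
  obtain ⟨T, hT, hTfin⟩ := Group.fg_iff.1 ‹Group.FG G'›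
  refine Group.fg_iff.2
    ⟨Coprod.inl '' S ∪ Coprod.inr '' T, ?_, (hSfin.image _).union (hTfin.image _)⟩
  rw [Subgroup.closure_union, ← MonoidHom.map_closure, ← MonoidHom.map_closure, hS, hT,
    ← MonoidHom.range_eq_map, ← MonoidHom.range_eq_map, Coprod.range_inl_sup_range_inr]

namespace FreeGroupBasis

variable {ι G : Type*} [Group G]

lemma finite_of_fg (b : FreeGroupBasis ι G) [Group.FG G] : Finite ι :=
  have : Group.FG (FreeGroup ι) :=
    Group.fg_of_surjective (f := b.repr.toMonoidHom) b.repr.surjective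
  FreeGroup.finite_of_fg

lemma rank_eq (b : FreeGroupBasis ι G) [Group.FG G] : Group.rank G = Nat.card ι := by
  have := b.finite_of_fg
  rw [Group.rank_congr b.repr, FreeGroup.rank_eq_card]

def coprod {ι κ G G' : Type u} [Group G] [Group G'] (b : FreeGroupBasis ι G)
    (b' : FreeGroupBasis κ G') : FreeGroupBasis (ι ⊕ κ) (G ∗ G') :=
  .ofLift _ (Sum.elim (Coprod.inl ∘ b) (Coprod.inr ∘ b'))
    ((Equiv.sumArrowEquivProdArrow _ _ _).trans
      ((b.lift.prodCongr b'.lift).trans Coprod.liftEquiv))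
    (by rintro H _ f (i | k) <;> simp [Coprod.liftEquiv])

end FreeGroupBasis

namespace IsFreeGroup

variable {G G' : Type u} [Group G] [Group G'] [IsFreeGroup G] [IsFreeGroup G']

instance : Group.ResiduallyFinite G :=
  .of_injective (toFreeGroup G).toMonoidHom (toFreeGroup G).injective

instance : IsFreeGroup (G ∗ G') := ((basis G).coprod (basis G')).isFreeGroup

lemma rank_coprod [Group.FG G] [Group.FG G'] :
    Group.rank (G ∗ G') = Group.rank G + Group.rank G' := by
  have := (basis G).finite_of_fg
  have := (basis G').finite_of_fg
  rw [((basis G).coprod (basis G')).rank_eq, Nat.card_sum, (basis G).rank_eq, (basis G').rank_eq]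

lemma nonempty_mulEquiv_of_rank_eq [Group.FG G] [Group.FG G']
    (h : Group.rank G = Group.rank G') : Nonempty (G ≃* G') := by
  have := (basis G).finite_of_fg
  have := (basis G').finite_of_fg
  rw [(basis G).rank_eq, (basis G').rank_eq] at h
  obtain ⟨e⟩ := Finite.card_eq.1 h
  exact ⟨(toFreeGroup G).trans ((FreeGroup.freeGroupCongr e).trans (toFreeGroup G').symm)⟩

theorem injective_of_surjective_of_rank_eq [Group.FG G] [Group.FG G'] {f : G →* G'}
    (hf : Surjective f) (h : Group.rank G' = Group.rank G) : Injective f := by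
  obtain ⟨e⟩ := nonempty_mulEquiv_of_rank_eq h
  exact Injective.of_comp (f := e) <|
    Group.injective_of_surjective_of_residuallyFinite (f := e.toMonoidHom.comp f)
      (e.surjective.comp hf)

end IsFreeGroup

instance : IsFreeGroup (Multiplicative ℤ) :=
  .ofMulEquiv (FreeGroup.mulEquivIntOfUnique (α := Unit))

lemma Group.rank_multiplicative_int : Group.rank (Multiplicative ℤ) = 1 := by
  rw [(FreeGroupBasis.ofRepr (FreeGroup.mulEquivIntOfUnique (α := Unit)).symm).rank_eq,
    Nat.card_unique]

/-- for a finitely generated subgroup `H ≤ F_n` and `g ∈ F_n`, the element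
`g` depends on `H` (i.e. `ker φ_g ≠ 1`) iff `rank ⟨H, g⟩ ≤ rank H`. -/
theorem stmt16 {n : ℕ} (H : Subgroup (FreeGroup (Fin n))) (g : FreeGroup (Fin n))
    [Group.FG ↥H] [Group.FG ↥(H ⊔ Subgroup.zpowers g)]
    (φ : ↥H ∗ Multiplicative ℤ →* FreeGroup (Fin n))
    (hφ : φ = Coprod.lift H.subtype (zpowersHom (FreeGroup (Fin n)) g)) :
    φ.ker ≠ ⊥ ↔ Group.rank ↥(H ⊔ Subgroup.zpowers g) ≤ Group.rank ↥H := by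
  have hrange : φ.range = H ⊔ Subgroup.zpowers g := by
    rw [hφ, Coprod.range_lift, Subgroup.range_subtype, Subgroup.range_zpowersHom]
  have : Group.FG φ.range := hrange ▸ inferInstance
  have hrank_coprod : Group.rank (↥H ∗ Multiplicative ℤ) = Group.rank H + 1 := by
    rw [IsFreeGroup.rank_coprod, Group.rank_multiplicative_int]
  have hrank_le : Group.rank φ.range ≤ Group.rank H + 1 :=
    hrank_coprod ▸ Group.rank_le_of_surjective _ φ.rangeRestrict_surjective
  rw [Ne, ← φ.ker_rangeRestrict, MonoidHom.ker_eq_bot_iff, ← Subgroup.rank_congr hrange]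
  constructor
  · intro hninj
    by_contra hgt
    exact hninj <| IsFreeGroup.injective_of_surjective_of_rank_eq φ.rangeRestrict_surjective
      (by omega)
  · intro hrank_le_H hinj
    have := Group.rank_congr (MulEquiv.ofBijective _ ⟨hinj, φ.rangeRestrict_surjective⟩)
    omega
end
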